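/- Let Γ ⊂ ℝⁿ be closed d-ADR with d < n-1. There exists c_H ∈ (0,1) depending only on d, n, and C_d such that: for any Λ ≥ 1, s > 0, and points X₁, X₂ ∈ ℝⁿ\Γ with dist(X_i,Γ) ≥ s and |X₁ - X₂| ≤ Λ s, there exist points Y_i ∈ B(X_i, s/2), i = 1,2, such that the straight line segment [Y₁,Y₂] satisfies dist([Y₁,Y₂], Γ) ≥ c_H Λ^{-d/(n-1-d)} s. (Harnack chain condition.) -/

import Mathlib

/-!
Argue by contradiction. If every segment from `B(X₁, s/2)` to `B(X₂, s/2)` came within `r` of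
`Γ`, so would each of the `K^(n-1)` translates `[X₁ + v, X₂ + v]`, where `v` runs over a grid of
mesh `4r` and diameter `≲ s` in the hyperplane orthogonal to `X₂ - X₁`. The points of `Γ` found
near distinct translates are `2r`-separated, and all lie in one ball of radius `3Λs` centred on
`Γ`, so the lower and upper ADR bounds give `(s/r)^(n-1) r^d ≲ (Λs)^d`, i.e.
`(s/r)^(n-1-d) ≲ Λ^d`. For `r = c_H Λ^{-d/(n-1-d)} s` this fails once `c_H` is small.
-/

open Metric MeasureTheory Set Filter Topology Module RealInnerProductSpace

theorem exists_mem_Ioo_rpow_lt {β δ ε : ℝ} (hβ : 0 < β) (hδ : 0 < δ) (hε : 0 < ε) :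
    ∃ c, c ∈ Ioo 0 δ ∧ c ^ β < ε := by
  have hlim : Tendsto (fun c : ℝ ↦ c ^ β) (𝓝[>] 0) (𝓝 0) := by
    simpa [Real.zero_rpow hβ.ne'] using
      (Real.continuousAt_rpow_const 0 β (Or.inr hβ.le)).tendsto.mono_left nhdsWithin_le_nhds
  have hsmall : ∀ᶠ c in 𝓝[>] (0 : ℝ), c ∈ Ioo 0 δ := Ioo_mem_nhdsGT hδ
  exact (hsmall.and (hlim.eventually (gt_mem_nhds hε))).exists

theorem rpow_sub_le_of_pow_mul_le {m : ℕ} {d A C L K r s : ℝ} (hA : 0 < A) (hC : 0 < C)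
    (hL : 0 ≤ L) (hr : 0 < r) (hs : 0 < s) (hK : s / (A * r) ≤ K)
    (h : K ^ m * (C⁻¹ * r ^ d) ≤ C * (L * s) ^ d) :
    (s / r) ^ ((m : ℝ) - d) ≤ A ^ m * C ^ 2 * L ^ d := by
  obtain ⟨T, hT, rfl⟩ : ∃ T, 0 < T ∧ s = T * r := ⟨s / r, div_pos hs hr, by field_simp⟩
  rw [mul_div_mul_right T A hr.ne'] at hK
  have key : T ^ m * r ^ d ≤ A ^ m * C ^ 2 * L ^ d * T ^ d * r ^ d :=
    calc T ^ m * r ^ d = A ^ m * C * ((T / A) ^ m * (C⁻¹ * r ^ d)) := by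
          rw [div_pow]; field_simp
      _ ≤ A ^ m * C * (K ^ m * (C⁻¹ * r ^ d)) := by gcongr
      _ ≤ A ^ m * C * (C * (L * (T * r)) ^ d) := by gcongr
      _ = A ^ m * C ^ 2 * L ^ d * T ^ d * r ^ d := by
          rw [Real.mul_rpow hL (by positivity), Real.mul_rpow hT.le hr.le]; ring
  rw [mul_div_cancel_right₀ T hr.ne', Real.rpow_sub hT, Real.rpow_natCast,
    div_le_iff₀ (Real.rpow_pos_of_pos hT d)]
  exact le_of_mul_le_mul_right key (Real.rpow_pos_of_pos hr d)

theorem exists_orthonormal_forall_inner_eq_zero {E : Type*} [NormedAddCommGroup E]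
    [InnerProductSpace ℝ E] [FiniteDimensional ℝ E] {m : ℕ} (hm : m + 1 ≤ finrank ℝ E) (u : E) :
    ∃ e : Fin m → E, Orthonormal ℝ e ∧ ∀ i, ⟪e i, u⟫ = 0 := by
  have hH : m ≤ finrank ℝ (ℝ ∙ u)ᗮ := by
    have := (ℝ ∙ u).finrank_add_finrank_orthogonal
    have : finrank ℝ (ℝ ∙ u) ≤ 1 := by
      simpa using finrank_span_le_card (R := ℝ) ({u} : Set E)
    omega
  set b := stdOrthonormalBasis ℝ (ℝ ∙ u)ᗮ
  refine ⟨fun i ↦ b (Fin.castLE hH i), ?_, fun i ↦ ?_⟩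
  · exact (b.orthonormal.comp_linearIsometry (ℝ ∙ u)ᗮ.subtypeₗᵢ).comp _ (Fin.castLE_injective hH)
  · rw [real_inner_comm]
    exact Submodule.mem_orthogonal_singleton_iff_inner_right.1 (b _).2

theorem card_mul_le_measure_of_pairwise_le_dist {X ι : Type*} [PseudoMetricSpace X]
    [MeasurableSpace X] [OpensMeasurableSpace X] [Fintype ι] (ν : Measure X) {p : ι → X} {r : ℝ}
    {a : ENNReal} {B : Set X} (hsep : Pairwise fun i j ↦ 2 * r ≤ dist (p i) (p j))
    (hlow : ∀ i, a ≤ ν (ball (p i) r)) (hB : ∀ i, ball (p i) r ⊆ B) :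
    Fintype.card ι * a ≤ ν B :=
  calc Fintype.card ι * a = ∑ _i : ι, a := by simp
    _ ≤ ∑ i, ν (ball (p i) r) := Finset.sum_le_sum fun i _ ↦ hlow i
    _ = ν (⋃ i, ball (p i) r) := by
      rw [measure_iUnion (fun i j hij ↦ ball_disjoint_ball (by linarith [hsep hij]))
        fun _ ↦ measurableSet_ball, tsum_fintype]
    _ ≤ ν B := measure_mono (iUnion_subset hB)

section SegmentTranslates

variable {E ι : Type*} [NormedAddCommGroup E] [InnerProductSpace ℝ E] [Fintype ι] {K : ℕ}

def gridPoint (e : ι → E) (h : ℝ) (k : ι → Fin K) : E := ∑ i, (h * k i) • e i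

theorem norm_gridPoint_le {e : ι → E} (he : Orthonormal ℝ e) {h : ℝ} (hh : 0 ≤ h)
    (k : ι → Fin K) : ‖gridPoint e h k‖ ≤ Fintype.card ι * h * K :=
  calc ‖gridPoint e h k‖ ≤ ∑ i, ‖(h * k i) • e i‖ := norm_sum_le _ _
    _ ≤ ∑ _i : ι, h * K := Finset.sum_le_sum fun i _ ↦ by
      rw [norm_smul, he.norm_eq_one, mul_one, Real.norm_of_nonneg (by positivity)]
      gcongr
      exact_mod_cast (k i).isLt.le
    _ = Fintype.card ι * h * K := by simp [mul_assoc]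

theorem le_norm_gridPoint_add_smul_sub {e : ι → E} (he : Orthonormal ℝ e) {u : E}
    (heu : ∀ i, ⟪e i, u⟫ = 0) {h : ℝ} (hh : 0 ≤ h) {k k' : ι → Fin K} (hkk : k ≠ k') (t t' : ℝ) :
    h ≤ ‖gridPoint e h k + t • u - (gridPoint e h k' + t' • u)‖ := by
  obtain ⟨i, hi⟩ := Function.ne_iff.1 hkk
  have hinner : ⟪e i, gridPoint e h k + t • u - (gridPoint e h k' + t' • u)⟫
      = h * ((k i : ℝ) - k' i) := by
    simp only [gridPoint, inner_sub_right, inner_add_right, real_inner_smul_right, heu,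
      he.inner_right_fintype]
    ring
  have hgap : 1 ≤ |(k i : ℝ) - k' i| := by
    have : (1 : ℤ) ≤ |(k i : ℤ) - k' i| :=
      Int.one_le_abs (sub_ne_zero.2 (by exact_mod_cast Fin.val_injective.ne hi))
    exact_mod_cast this
  calc h ≤ |h * ((k i : ℝ) - k' i)| := by
        rw [abs_mul, abs_of_nonneg hh]; exact le_mul_of_one_le_right hh hgap
    _ ≤ _ := by
        rw [← hinner]
        simpa [he.norm_eq_one] using abs_real_inner_le_norm (e i) _

theorem pow_mul_le_of_forall_segment_near [MeasurableSpace E] [OpensMeasurableSpace E]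
    {m : ℕ} {e : Fin m → E} (he : Orthonormal ℝ e) {X₁ X₂ : E} (heu : ∀ i, ⟪e i, X₂ - X₁⟫ = 0)
    {Γ : Set E} (hΓ : Γ.Nonempty) (ν : Measure E) {r ρ R : ℝ} {a b : ENNReal} (hr : 0 ≤ r)
    (hK : 4 * m * K * r < ρ) (hR : 3 * r + 2 * ρ + dist X₁ X₂ ≤ R)
    (hnear : ∀ Y₁ ∈ ball X₁ ρ, ∀ Y₂ ∈ ball X₂ ρ, ∃ Z ∈ segment ℝ Y₁ Y₂, infDist Z Γ < r)
    (hlow : ∀ x ∈ Γ, a ≤ ν (ball x r)) (hup : ∀ x ∈ Γ, ν (ball x R) ≤ b) :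
    (K : ENNReal) ^ m * a ≤ b := by
  set u := X₂ - X₁
  set v := gridPoint e (4 * r) (K := K)
  have hv : ∀ k, ‖v k‖ < ρ := fun k ↦ (norm_gridPoint_le he (by positivity) k).trans_lt <| by
    rw [Fintype.card_fin]; linarith
  have hZ : ∀ k, ∃ t ∈ Icc (0 : ℝ) 1, ∃ γ ∈ Γ, dist (X₁ + v k + t • u) γ < r := by
    intro k
    obtain ⟨Z, hZ, hZΓ⟩ := hnear (X₁ + v k) (by simpa using hv k) (X₂ + v k) (by simpa using hv k)
    rw [segment_eq_image'] at hZ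
    obtain ⟨t, ht, rfl⟩ := hZ
    obtain ⟨γ, hγ, hγZ⟩ := (infDist_lt_iff hΓ).1 hZΓ
    exact ⟨t, ht, γ, hγ, by simpa [u] using hγZ⟩
  choose t ht γ hγ hγZ using hZ
  rcases isEmpty_or_nonempty (Fin m → Fin K) with hempty | ⟨⟨k₀⟩⟩
  · have hcard : K ^ m = 0 := by
      simpa only [Fintype.card_fun, Fintype.card_fin] using
        Fintype.card_eq_zero (α := Fin m → Fin K)
    simp [← Nat.cast_pow, hcard]
  have hsep : Pairwise fun k k' ↦ 2 * r ≤ dist (γ k) (γ k') := by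
    intro k k' hkk
    have hZZ : 4 * r ≤ dist (X₁ + v k + t k • u) (X₁ + v k' + t k' • u) := by
      rw [dist_eq_norm, add_assoc, add_assoc, add_sub_add_left_eq_sub]
      exact le_norm_gridPoint_add_smul_sub he heu (by positivity) hkk (t k) (t k')
    linarith [dist_triangle4 (X₁ + v k + t k • u) (γ k) (γ k') (X₁ + v k' + t k' • u),
      hγZ k, hγZ k', dist_comm (γ k') (X₁ + v k' + t k' • u)]
  have hB : ∀ k, ball (γ k) r ⊆ ball (γ k₀) R := by
    intro k
    refine ball_subset_ball' ?_
    have ht : ‖(t k - t k₀) • u‖ ≤ dist X₁ X₂ := by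
      rw [norm_smul, dist_eq_norm', Real.norm_eq_abs]
      refine mul_le_of_le_one_left (norm_nonneg _) (abs_sub_le_iff.2 ⟨?_, ?_⟩) <;>
        linarith [(ht k).1, (ht k).2, (ht k₀).1, (ht k₀).2]
    have hZZ : dist (X₁ + v k + t k • u) (X₁ + v k₀ + t k₀ • u) ≤ 2 * ρ + dist X₁ X₂ := by
      rw [dist_eq_norm, show X₁ + v k + t k • u - (X₁ + v k₀ + t k₀ • u)
        = v k - v k₀ + (t k - t k₀) • u by rw [sub_smul]; abel]
      linarith [norm_add_le (v k - v k₀) ((t k - t k₀) • u), norm_sub_le (v k) (v k₀), hv k, hv k₀]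
    linarith [dist_triangle4 (γ k) (X₁ + v k + t k • u) (X₁ + v k₀ + t k₀ • u) (γ k₀),
      hγZ k, hγZ k₀, dist_comm (γ k) (X₁ + v k + t k • u)]
  calc (K : ENNReal) ^ m * a = Fintype.card (Fin m → Fin K) * a := by simp
    _ ≤ ν (ball (γ k₀) R) :=
      card_mul_le_measure_of_pairwise_le_dist ν hsep (fun k ↦ hlow _ (hγ k)) hB
    _ ≤ b := hup _ (hγ k₀)

theorem rpow_sub_le_of_forall_segment_near [FiniteDimensional ℝ E] [MeasurableSpace E]
    [BorelSpace E] {m : ℕ} (hm : 0 < m) (hE : m + 1 ≤ finrank ℝ E) {Γ : Set E} (hΓ : Γ.Nonempty)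
    (ν : Measure E) {d C : ℝ} (hC : 0 < C)
    (hν : ∀ x ∈ Γ, ∀ r : ℝ, 0 < r →
      ENNReal.ofReal (C⁻¹ * r ^ d) ≤ ν (ball x r) ∧ ν (ball x r) ≤ ENNReal.ofReal (C * r ^ d))
    {Λ r s : ℝ} (hΛ : 1 ≤ Λ) (hr : 0 < r) (hrs : 32 * m * r ≤ s) {X₁ X₂ : E}
    (hX : dist X₁ X₂ ≤ Λ * s)
    (hnear : ∀ Y₁ ∈ ball X₁ (s / 2), ∀ Y₂ ∈ ball X₂ (s / 2),
      ∃ Z ∈ segment ℝ Y₁ Y₂, infDist Z Γ < r) :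
    (s / r) ^ ((m : ℝ) - d) ≤ (32 * m) ^ m * C ^ 2 * (3 * Λ) ^ d := by
  have hm1 : (1 : ℝ) ≤ m := by exact_mod_cast hm
  have hs : 0 < s := by nlinarith
  obtain ⟨e, he, heu⟩ := exists_orthonormal_forall_inner_eq_zero hE (X₂ - X₁)
  set x := s / (16 * m * r)
  have hx : 2 ≤ x := by rw [le_div_iff₀ (by positivity)]; linarith
  have hKx : (⌊x⌋₊ : ℝ) * (16 * m * r) ≤ s :=
    (le_div_iff₀ (by positivity)).1 (Nat.floor_le (by positivity))
  have hKx' : s / (32 * m * r) ≤ ⌊x⌋₊ := by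
    have hhalf : s / (32 * m * r) = x / 2 := by simp only [x]; field_simp; ring
    linarith [Nat.sub_one_lt_floor x]
  have hcount := pow_mul_le_of_forall_segment_near he heu hΓ ν hr.le (K := ⌊x⌋₊) (ρ := s / 2)
    (R := 3 * Λ * s) (by nlinarith) (by nlinarith) hnear (fun y hy ↦ (hν y hy r hr).1)
    (fun y hy ↦ (hν y hy _ (by positivity)).2)
  refine rpow_sub_le_of_pow_mul_le (by positivity) hC (by positivity) hr hs hKx' ?_
  rwa [← ENNReal.ofReal_natCast, ← ENNReal.ofReal_pow (by positivity), ← ENNReal.ofReal_mul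
    (by positivity), ENNReal.ofReal_le_ofReal_iff (by positivity)] at hcount

theorem inv_rpow_le_of_forall_segment_near [FiniteDimensional ℝ E] [MeasurableSpace E]
    [BorelSpace E] {m : ℕ} (hE : m + 1 ≤ finrank ℝ E) {Γ : Set E} (hΓ : Γ.Nonempty)
    (ν : Measure E) {d C : ℝ} (hC : 0 < C)
    (hν : ∀ x ∈ Γ, ∀ r : ℝ, 0 < r →
      ENNReal.ofReal (C⁻¹ * r ^ d) ≤ ν (ball x r) ∧ ν (ball x r) ≤ ENNReal.ofReal (C * r ^ d))
    (hd : 0 < d) (hdm : d < m) {c Λ s : ℝ} (hc : 0 < c) (hcm : 32 * m * c ≤ 1) (hΛ : 1 ≤ Λ)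
    (hs : 0 < s) {X₁ X₂ : E} (hX : dist X₁ X₂ ≤ Λ * s)
    (hnear : ∀ Y₁ ∈ ball X₁ (s / 2), ∀ Y₂ ∈ ball X₂ (s / 2),
      ∃ Z ∈ segment ℝ Y₁ Y₂, infDist Z Γ < c * Λ ^ (-(d / (m - d))) * s) :
    (c ^ ((m : ℝ) - d))⁻¹ ≤ (32 * m) ^ m * C ^ 2 * 3 ^ d := by
  have hβ : 0 < (m : ℝ) - d := by linarith
  have hΛ0 : 0 < Λ := by linarith
  set r := c * Λ ^ (-(d / (m - d))) * s
  have hrs : 32 * m * r ≤ s := by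
    have hΛβ : Λ ^ (-(d / (m - d))) ≤ 1 :=
      Real.rpow_le_one_of_one_le_of_nonpos hΛ (neg_nonpos.2 (div_pos hd hβ).le)
    calc 32 * m * r = 32 * m * c * Λ ^ (-(d / (m - d))) * s := by ring
      _ ≤ 1 * 1 * s := by gcongr
      _ = s := by ring
  have hbound := rpow_sub_le_of_forall_segment_near (by exact_mod_cast hd.trans hdm) hE hΓ ν hC
    hν hΛ (by positivity) hrs hX hnear
  have hscale : (s / r) ^ ((m : ℝ) - d) = (c ^ ((m : ℝ) - d))⁻¹ * Λ ^ d := by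
    rw [show s / r = c⁻¹ * Λ ^ (d / (m - d)) by
        simp only [r]; rw [Real.rpow_neg hΛ0.le]; field_simp,
      Real.mul_rpow (by positivity) (by positivity), Real.inv_rpow hc.le, ← Real.rpow_mul hΛ0.le,
      div_mul_cancel₀ d hβ.ne']
  rw [hscale, Real.mul_rpow (by norm_num) hΛ0.le, ← mul_assoc] at hbound
  exact le_of_mul_le_mul_right hbound (by positivity)

end SegmentTranslates

theorem adr_harnack_chains_general {n : ℕ} (Γ : Set (EuclideanSpace ℝ (Fin n)))
    (hne : Γ.Nonempty) (d Cd : ℝ) (hd : 0 < d) (hdn : d < (n : ℝ) - 1)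
    (hCd : 1 ≤ Cd)
    (hADR : ∀ x ∈ Γ, ∀ r : ℝ, 0 < r →
      ENNReal.ofReal (Cd⁻¹ * r ^ d) ≤ μH[d] (Γ ∩ ball x r) ∧
      μH[d] (Γ ∩ ball x r) ≤ ENNReal.ofReal (Cd * r ^ d)) :
    ∃ cH : ℝ, 0 < cH ∧ cH < 1 ∧
      ∀ Λ : ℝ, 1 ≤ Λ → ∀ s : ℝ, 0 < s → ∀ X₁ X₂ : EuclideanSpace ℝ (Fin n),
        s ≤ Metric.infDist X₁ Γ → s ≤ Metric.infDist X₂ Γ → dist X₁ X₂ ≤ Λ * s →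
        ∃ Y₁ ∈ ball X₁ (s / 2), ∃ Y₂ ∈ ball X₂ (s / 2),
          ∀ Z ∈ segment ℝ Y₁ Y₂,
            cH * Λ ^ (-(d / ((n : ℝ) - 1 - d))) * s ≤ Metric.infDist Z Γ := by
  obtain ⟨m, rfl⟩ : ∃ m, n = m + 1 :=
    ⟨n - 1, (Nat.succ_pred_eq_of_pos (by exact_mod_cast (by linarith : (0 : ℝ) < n))).symm⟩
  rw [show ((m + 1 : ℕ) : ℝ) - 1 - d = m - d by push_cast; ring]
  push_cast at hdn
  have hβ : 0 < (m : ℝ) - d := by linarith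
  have hm : (1 : ℝ) ≤ m := by exact_mod_cast hd.trans (by linarith : d < m)
  have h32m : 0 < 32 * (m : ℝ) := by linarith
  obtain ⟨cH, ⟨hcH, hcHm⟩, hcHE⟩ := exists_mem_Ioo_rpow_lt hβ (one_div_pos.2 h32m)
    (inv_pos.2 (by positivity : 0 < (32 * (m : ℝ)) ^ m * Cd ^ 2 * 3 ^ d))
  have hcm : 32 * m * cH ≤ 1 := by rw [lt_div_iff₀' h32m] at hcHm; exact hcHm.le
  refine ⟨cH, hcH, hcHm.trans_le ((div_le_one h32m).2 (by linarith)),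
    fun Λ hΛ s hs X₁ X₂ _ _ hX ↦ ?_⟩
  by_contra! hnear
  have hν : ∀ x ∈ Γ, ∀ r : ℝ, 0 < r →
      ENNReal.ofReal (Cd⁻¹ * r ^ d) ≤ μH[d].restrict Γ (ball x r) ∧
      μH[d].restrict Γ (ball x r) ≤ ENNReal.ofReal (Cd * r ^ d) := fun x hx r hr ↦ by
    simpa only [Measure.restrict_apply measurableSet_ball, inter_comm] using hADR x hx r hr
  exact ((lt_inv_comm₀ (by positivity) (by positivity)).1 hcHE).not_ge
    (inv_rpow_le_of_forall_segment_near (by simp) hne _ (by linarith) hν hd (by linarith) hcH hcm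
      hΛ hs hX hnear)

/-- Harnack chain condition for the complement of a closed `d`-ADR set with `d < n-1`:
there is `c_H ∈ (0,1)` such that any two points `X₁, X₂` with `dist(X_i,Γ) ≥ s` and
`|X₁-X₂| ≤ Λs` can be moved to `Y_i ∈ B(X_i, s/2)` so that the segment `[Y₁,Y₂]` stays at
distance at least `c_H Λ^{-d/(n-1-d)} s` from `Γ`. -/
theorem adr_harnack_chains {n : ℕ} (Γ : Set (EuclideanSpace ℝ (Fin n)))
    (hΓ : IsClosed Γ) (hne : Γ.Nonempty) (d Cd : ℝ) (hd : 0 < d) (hdn : d < (n : ℝ) - 1)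
    (hCd : 1 ≤ Cd)
    (hADR : ∀ x ∈ Γ, ∀ r : ℝ, 0 < r →
      ENNReal.ofReal (Cd⁻¹ * r ^ d) ≤ μH[d] (Γ ∩ ball x r) ∧
      μH[d] (Γ ∩ ball x r) ≤ ENNReal.ofReal (Cd * r ^ d)) :
    ∃ cH : ℝ, 0 < cH ∧ cH < 1 ∧
      ∀ Λ : ℝ, 1 ≤ Λ → ∀ s : ℝ, 0 < s → ∀ X₁ X₂ : EuclideanSpace ℝ (Fin n),
        s ≤ Metric.infDist X₁ Γ → s ≤ Metric.infDist X₂ Γ → dist X₁ X₂ ≤ Λ * s →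
        ∃ Y₁ ∈ ball X₁ (s / 2), ∃ Y₂ ∈ ball X₂ (s / 2),
          ∀ Z ∈ segment ℝ Y₁ Y₂,
            cH * Λ ^ (-(d / ((n : ℝ) - 1 - d))) * s ≤ Metric.infDist Z Γ :=
  adr_harnack_chains_general Γ hne d Cd hd hdn hCd hADR
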